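/- arXiv:2509.01384 — 2 statements merged into one kernel-verified Lean document; each statement's English description precedes it below -/
import Mathlib

section
/- Let K be a simplicial complex and S ⊆ K. Then S is a cosimplicial complex if and only if S is the difference of two sets open for K, and also if and only if S is the difference of two sets closed for K. -/
/-!
Set differences of sets that are both upward closed (open) or both downward closed (closed) are
convex for inclusion, which is cosimpliciality. Conversely, a cosimplicial `S ⊆ K` is recovered as
`U \ (U \ S)` where `U` is its upward closure in `K` (resp. its downward closure `cl S`): convexity
of `S` is exactly what makes `U \ S` again open (resp. closed).
-/

open Finset

abbrev Simplex : Type := Finset ℕ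
abbrev Cplx : Type := Finset (Finset ℕ)

/-- A simplicial complex: a finite set of nonempty finite sets closed under
taking nonempty subsets. -/
def IsSimpComplex (K : Cplx) : Prop :=
  (∀ τ ∈ K, τ.Nonempty) ∧ ∀ τ ∈ K, ∀ σ : Simplex, σ ⊆ τ → σ.Nonempty → σ ∈ K

/-- A cosimplicial complex: for all σ, τ ∈ S, every ν with σ ⊆ ν ⊆ τ is in S. -/
def IsCosimplicial (S : Cplx) : Prop :=
  ∀ σ ∈ S, ∀ τ ∈ S, ∀ ν : Simplex, σ ⊆ ν → ν ⊆ τ → ν ∈ S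

/-- S is open for K. -/
def IsOpenFor (K S : Cplx) : Prop :=
  S ⊆ K ∧ ∀ σ ∈ S, ∀ τ ∈ K, σ ⊆ τ → τ ∈ S

/-- S is closed for K. -/
def IsClosedFor (K S : Cplx) : Prop :=
  S ⊆ K ∧ IsSimpComplex S

/-- Closure of a finite set of simplexes: all nonempty subsets of members. -/
def cl (S : Cplx) : Cplx :=
  S.biUnion fun τ => τ.powerset.filter fun σ => σ.Nonempty

/-- (σ, τ) is a free pair for K: τ is the only face of K properly containing σ. -/
def IsFreePair (K : Cplx) (σ τ : Simplex) : Prop :=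
  σ ∈ K ∧ τ ∈ K ∧ σ ⊂ τ ∧ ∀ ρ ∈ K, σ ⊂ ρ → ρ = τ

/-- K' is an elementary expansion of K. -/
def ElemExpansion (K' K : Cplx) : Prop :=
  ∃ σ τ : Simplex, σ ∉ K ∧ τ ∉ K ∧ K' = K ∪ {σ, τ} ∧ IsFreePair K' σ τ

/-- K' is an elementary filling of K: K' = K ∪ {ν} with ν a facet of K'. -/
def ElemFilling (K' K : Cplx) : Prop :=
  ∃ ν : Simplex, ν ∉ K ∧ K' = insert ν K ∧ ∀ ρ ∈ K', ν ⊆ ρ → ρ = ν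

/-- A collapses onto B: a sequence of elementary collapses from A to B. -/
def Collapses (A B : Cplx) : Prop :=
  Relation.ReflTransGen (fun X Y : Cplx => ElemExpansion X Y) A B

/-- A Morse sequence from L to K, as W 0, …, W k, consisting of simplicial
complexes, each step an elementary expansion or an elementary filling. -/
def MorseSeq (L K : Cplx) (k : ℕ) (W : ℕ → Cplx) : Prop :=
  W 0 = L ∧ W k = K ∧ (∀ i ≤ k, IsSimpComplex (W i)) ∧
  ∀ i < k, ElemExpansion (W (i+1)) (W i) ∨ ElemFilling (W (i+1)) (W i)

/-- F is a stack on S: monotone with respect to inclusion. -/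
def IsStackOn (S : Cplx) (F : Simplex → ℤ) : Prop :=
  ∀ σ ∈ S, ∀ τ ∈ S, σ ⊆ τ → F σ ≤ F τ

/-- (σ, τ) is a regular pair of the Morse sequence W (of length k). -/
def RegularPair (k : ℕ) (W : ℕ → Cplx) (σ τ : Simplex) : Prop :=
  ∃ i < k, σ ∉ W i ∧ τ ∉ W i ∧ W (i+1) = W i ∪ {σ, τ} ∧ IsFreePair (W (i+1)) σ τ

/-- An F-sequence: a Morse sequence whose regular pairs satisfy F σ = F τ. -/
def FSeq (F : Simplex → ℤ) (L K : Cplx) (k : ℕ) (W : ℕ → Cplx) : Prop :=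
  MorseSeq L K k W ∧ ∀ σ τ : Simplex, RegularPair k W σ τ → F σ = F τ

/-- A flooding sequence: an F-sequence from ∅ to K such that F σ ≤ F τ whenever
σ ∈ K_i and τ ∈ K_j appears strictly later (τ ∉ K_i), with i < j. -/
def Flooding (F : Simplex → ℤ) (K : Cplx) (k : ℕ) (W : ℕ → Cplx) : Prop :=
  FSeq F ∅ K k W ∧
  ∀ i j : ℕ, i < j → j ≤ k → ∀ σ ∈ W i, ∀ τ ∈ W j, τ ∉ W i → F σ ≤ F τ

/-- Coboundary δ(ν, S) of ν in S. -/
def cob (S : Cplx) (ν : Simplex) : Cplx :=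
  S.filter fun μ => ν ⊆ μ ∧ μ.card = ν.card + 1

/-- Boundary ∂(ν, S) of ν in S. -/
def bdry (S : Cplx) (ν : Simplex) : Cplx :=
  S.filter fun η => η ⊆ ν ∧ η.card + 1 = ν.card

def openStar (K S : Cplx) : Cplx :=
  K.filter fun τ => ∃ σ ∈ S, σ ⊆ τ

theorem mem_openStar {K S : Cplx} {τ : Simplex} : τ ∈ openStar K S ↔ τ ∈ K ∧ ∃ σ ∈ S, σ ⊆ τ :=
  mem_filter

theorem subset_openStar {K S : Cplx} (hS : S ⊆ K) : S ⊆ openStar K S :=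
  fun σ hσ => mem_openStar.2 ⟨hS hσ, σ, hσ, subset_rfl⟩

theorem isOpenFor_openStar (K S : Cplx) : IsOpenFor K (openStar K S) := by
  refine ⟨filter_subset _ _, fun σ hσ τ hτ hστ => ?_⟩
  obtain ⟨-, ρ, hρ, hρσ⟩ := mem_openStar.1 hσ
  exact mem_openStar.2 ⟨hτ, ρ, hρ, hρσ.trans hστ⟩

theorem IsCosimplicial.isOpenFor_openStar_sdiff {S : Cplx} (hS : IsCosimplicial S) (K : Cplx) :
    IsOpenFor K (openStar K S \ S) := by
  refine ⟨sdiff_subset.trans (filter_subset _ _), fun σ hσ τ hτ hστ => ?_⟩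
  obtain ⟨hσ, hσS⟩ := mem_sdiff.1 hσ
  obtain ⟨-, ρ, hρ, hρσ⟩ := mem_openStar.1 hσ
  exact mem_sdiff.2 ⟨(isOpenFor_openStar K S).2 σ hσ τ hτ hστ,
    fun hτS => hσS (hS ρ hρ τ hτS σ hρσ hστ)⟩

theorem IsSimpComplex.isCosimplicial_sdiff_of_isOpenFor {K U V : Cplx} (hK : IsSimpComplex K)
    (hU : IsOpenFor K U) (hV : IsOpenFor K V) : IsCosimplicial (U \ V) := by
  intro σ hσ τ hτ ν hσν hντ
  rw [mem_sdiff] at hσ hτ ⊢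
  have hνK : ν ∈ K := hK.2 τ (hU.1 hτ.1) ν hντ ((hK.1 σ (hU.1 hσ.1)).mono hσν)
  exact ⟨hU.2 σ hσ.1 ν hνK hσν, fun hνV => hτ.2 (hV.2 ν hνV τ (hU.1 hτ.1) hντ)⟩

theorem mem_cl {S : Cplx} {τ : Simplex} : τ ∈ cl S ↔ τ.Nonempty ∧ ∃ ρ ∈ S, τ ⊆ ρ := by
  simp only [cl, mem_biUnion, mem_filter, mem_powerset]
  exact ⟨fun ⟨ρ, hρ, hτρ, hτ⟩ => ⟨hτ, ρ, hρ, hτρ⟩, fun ⟨hτ, ρ, hρ, hτρ⟩ => ⟨ρ, hρ, hτρ, hτ⟩⟩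

theorem isSimpComplex_cl (S : Cplx) : IsSimpComplex (cl S) := by
  refine ⟨fun τ hτ => (mem_cl.1 hτ).1, fun τ hτ σ hστ hσ => ?_⟩
  obtain ⟨-, ρ, hρ, hτρ⟩ := mem_cl.1 hτ
  exact mem_cl.2 ⟨hσ, ρ, hρ, hστ.trans hτρ⟩

theorem IsSimpComplex.cl_subset {K S : Cplx} (hK : IsSimpComplex K) (hS : S ⊆ K) : cl S ⊆ K := by
  intro τ hτ
  obtain ⟨hτ, ρ, hρ, hτρ⟩ := mem_cl.1 hτ
  exact hK.2 ρ (hS hρ) τ hτρ hτ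

theorem subset_cl {S : Cplx} (hS : ∀ σ ∈ S, σ.Nonempty) : S ⊆ cl S :=
  fun σ hσ => mem_cl.2 ⟨hS σ hσ, σ, hσ, subset_rfl⟩

theorem IsCosimplicial.isSimpComplex_cl_sdiff {S : Cplx} (hS : IsCosimplicial S) :
    IsSimpComplex (cl S \ S) := by
  refine ⟨fun τ hτ => (isSimpComplex_cl S).1 τ (mem_sdiff.1 hτ).1, fun τ hτ σ hστ hσ => ?_⟩
  obtain ⟨hτ, hτS⟩ := mem_sdiff.1 hτ
  obtain ⟨-, ρ, hρ, hτρ⟩ := mem_cl.1 hτ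
  exact mem_sdiff.2 ⟨(isSimpComplex_cl S).2 τ hτ σ hστ hσ,
    fun hσS => hτS (hS σ hσS ρ hρ τ hστ hτρ)⟩

theorem IsSimpComplex.isCosimplicial_sdiff {C D : Cplx} (hC : IsSimpComplex C)
    (hD : IsSimpComplex D) : IsCosimplicial (C \ D) := by
  intro σ hσ τ hτ ν hσν hντ
  rw [mem_sdiff] at hσ hτ ⊢
  have hσ_ne : σ.Nonempty := hC.1 σ hσ.1
  exact ⟨hC.2 τ hτ.1 ν hντ (hσ_ne.mono hσν), fun hνD => hσ.2 (hD.2 ν hνD σ hσν hσ_ne)⟩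

theorem cosimplicial_iff_diff_open_and_iff_diff_closed (K S : Cplx)
    (hK : IsSimpComplex K) (hS : S ⊆ K) :
    (IsCosimplicial S ↔ ∃ U V : Cplx, IsOpenFor K U ∧ IsOpenFor K V ∧ S = U \ V) ∧
    (IsCosimplicial S ↔ ∃ C D : Cplx, IsClosedFor K C ∧ IsClosedFor K D ∧ S = C \ D) := by
  have hclK : cl S ⊆ K := hK.cl_subset hS
  refine ⟨⟨fun hco => ?_, ?_⟩, ⟨fun hco => ?_, ?_⟩⟩
  · exact ⟨openStar K S, openStar K S \ S, isOpenFor_openStar K S, hco.isOpenFor_openStar_sdiff K,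
      (Finset.sdiff_sdiff_eq_self (subset_openStar hS)).symm⟩
  · rintro ⟨U, V, hU, hV, rfl⟩
    exact hK.isCosimplicial_sdiff_of_isOpenFor hU hV
  · exact ⟨cl S, cl S \ S, ⟨hclK, isSimpComplex_cl S⟩,
      ⟨sdiff_subset.trans hclK, hco.isSimpComplex_cl_sdiff⟩,
      (Finset.sdiff_sdiff_eq_self (subset_cl fun σ hσ => hK.1 σ (hS hσ))).symm⟩
  · rintro ⟨C, D, hC, hD, rfl⟩
    exact hC.2.isCosimplicial_sdiff hD.2
end

section
/- Let F be a stack on K and W = ⟨∅ = K_0, …, K_k = K⟩ an F-sequence. Then W is a flooding sequence if and only if, for each i ∈ [0, k], K_i is a subcomplex for F (i.e., for all σ ∈ K, τ ∈ K_i, if F(σ) < F(τ) then σ ∈ K_i). -/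
open Finset

/-! A Morse sequence only grows, so `W i ⊆ W j ⊆ K` for `i ≤ j ≤ k`. Hence a violation of
flooding (`σ ∈ W i`, `τ ∈ W j \ W i`, `F τ < F σ`) is a simplex of `K \ W i` strictly below a
simplex of `W i` in `F`, and conversely such a simplex gives a violation with `j = k`. -/

lemma ElemExpansion.subset {K' K : Cplx} (h : ElemExpansion K' K) : K ⊆ K' := by
  obtain ⟨σ, τ, -, -, rfl, -⟩ := h
  exact subset_union_left

lemma ElemFilling.subset {K' K : Cplx} (h : ElemFilling K' K) : K ⊆ K' := by
  obtain ⟨ν, -, rfl, -⟩ := h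
  exact subset_insert ν K

namespace MorseSeq

variable {L K : Cplx} {k : ℕ} {W : ℕ → Cplx}

lemma subset_succ (hW : MorseSeq L K k W) {i : ℕ} (hi : i < k) : W i ⊆ W (i + 1) :=
  (hW.2.2.2 i hi).elim ElemExpansion.subset ElemFilling.subset

lemma subset_of_le (hW : MorseSeq L K k W) {i j : ℕ} (hij : i ≤ j) (hj : j ≤ k) :
    W i ⊆ W j := by
  induction j, hij using Nat.le_induction with
  | base => exact subset_rfl
  | succ j _ ih => exact (ih (by omega)).trans (hW.subset_succ (by omega))

lemma subset_last (hW : MorseSeq L K k W) {i : ℕ} (hi : i ≤ k) : W i ⊆ K :=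
  hW.2.1 ▸ hW.subset_of_le hi le_rfl

end MorseSeq

theorem flooding_iff_subcomplexes_for_F_general (K : Cplx) (F : Simplex → ℤ)
    (k : ℕ) (W : ℕ → Cplx)
    (hW : FSeq F ∅ K k W) :
    Flooding F K k W ↔
      ∀ i ≤ k, ∀ σ ∈ K, ∀ τ ∈ W i, F σ < F τ → σ ∈ W i := by
  have hlast : W k = K := hW.1.2.1
  constructor
  · rintro ⟨-, hflood⟩ i hi σ hσ τ hτ hlt
    by_contra hσi
    have hik : i < k := hi.lt_of_ne fun h => hσi (h ▸ hlast ▸ hσ)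
    exact (hflood i k hik le_rfl τ hτ σ (hlast ▸ hσ) hσi).not_gt hlt
  · refine fun hsub => ⟨hW, fun i j hij hj σ hσ τ hτ hτi => ?_⟩
    by_contra! hlt
    exact hτi (hsub i (by omega) τ (hW.1.subset_last hj hτ) σ hσ hlt)

theorem flooding_iff_subcomplexes_for_F (K : Cplx) (F : Simplex → ℤ)
    (k : ℕ) (W : ℕ → Cplx)
    (hK : IsSimpComplex K) (hF : IsStackOn K F) (hW : FSeq F ∅ K k W) :
    Flooding F K k W ↔
      ∀ i ≤ k, ∀ σ ∈ K, ∀ τ ∈ W i, F σ < F τ → σ ∈ W i :=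
  flooding_iff_subcomplexes_for_F_general K F k W hW
end
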